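/- arXiv:2506.15769 — 3 statements merged into one kernel-verified Lean document; each statement's English description precedes it below -/
import Mathlib

section
/- Conversely, if f: ℝ → ℂ is 2π-periodic, continuous, and its Fourier coefficients satisfy |f̂(ξ)| ≤ C e^{-κ|ξ|} for all ξ ∈ ℤ and some C, κ > 0, then f extends holomorphically to the open strip {z ∈ ℂ : |Im z| < κ}. -/
/-! Since `|f̂(n)| ≤ C e^{-κ|n|}` is summable, `f` is the pointwise sum of its Fourier series
`∑ f̂(n) e^{inx}`. For `|Im w| < κ' < κ` the `n`-th term of `∑ f̂(n) e^{inw}` is bounded by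
`C e^{-(κ - κ')|n|}`, again summable, so this series converges locally uniformly on the strip
`|Im z| < κ` and its sum is holomorphic there. -/

open Complex Real

instance : Fact (0 < 2 * π) := ⟨two_pi_pos⟩

lemma summable_exp_mul_abs_int {a : ℝ} (ha : a < 0) :
    Summable fun n : ℤ => Real.exp (a * |(n : ℝ)|) := by
  apply Summable.of_nat_of_neg <;>
  · simp only [Int.cast_natCast, Int.cast_neg, abs_neg, Nat.abs_cast]
    simpa only [mul_comm] using Real.summable_exp_nat_mul_iff.mpr ha

lemma fourier_coe_two_pi (n : ℤ) (x : ℝ) :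
    fourier n (x : AddCircle (2 * π)) = exp (I * n * x) := by
  rw [fourier_coe_apply]
  congr 1
  have hπ : (π : ℂ) ≠ 0 := ofReal_ne_zero.mpr pi_ne_zero
  push_cast
  field_simp

lemma fourierCoeff_periodic_lift_two_pi {f : ℝ → ℂ} (hfp : f.Periodic (2 * π)) (n : ℤ) :
    fourierCoeff hfp.lift n =
      1 / (2 * (π : ℂ)) * ∫ x in (0 : ℝ)..2 * π, f x * exp (-I * n * x) := by
  rw [fourierCoeff_eq_intervalIntegral _ n 0, zero_add, real_smul]
  push_cast
  congr 1
  refine intervalIntegral.integral_congr fun x _ => ?_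
  simp only [smul_eq_mul, fourier_coe_two_pi, hfp.lift_coe, Int.cast_neg]
  rw [mul_comm]
  ring_nf

noncomputable def fourierSeriesExtension (c : ℤ → ℂ) (z : ℂ) : ℂ :=
  ∑' n : ℤ, c n * exp (I * n * z)

lemma norm_exp_I_mul_intCast_mul_le (n : ℤ) {w : ℂ} {κ' : ℝ} (hw : |w.im| ≤ κ') :
    ‖exp (I * n * w)‖ ≤ Real.exp (κ' * |(n : ℝ)|) := by
  have hre : (I * n * w).re = -(n : ℝ) * w.im := by simp [mul_re, mul_im]
  rw [norm_exp, hre, Real.exp_le_exp]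
  calc -(n : ℝ) * w.im ≤ |(n : ℝ)| * |w.im| := by
        rw [← abs_neg, ← abs_mul, neg_mul]; exact le_abs_self _
    _ ≤ κ' * |(n : ℝ)| := by rw [mul_comm]; gcongr

lemma isOpen_setOf_abs_im_lt (r : ℝ) : IsOpen {w : ℂ | |w.im| < r} :=
  isOpen_lt (continuous_abs.comp continuous_im) continuous_const

section DecayingCoefficients

variable {c : ℤ → ℂ} {C κ : ℝ}

lemma summable_of_norm_le_exp_neg_mul_abs (hκ : 0 < κ)
    (hc : ∀ n : ℤ, ‖c n‖ ≤ C * Real.exp (-κ * |(n : ℝ)|)) : Summable c :=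
  .of_norm_bounded ((summable_exp_mul_abs_int (neg_neg_of_pos hκ)).mul_left C) hc

lemma differentiableOn_fourierSeriesExtension {κ' : ℝ} (hκ' : κ' < κ)
    (hc : ∀ n : ℤ, ‖c n‖ ≤ C * Real.exp (-κ * |(n : ℝ)|)) :
    DifferentiableOn ℂ (fourierSeriesExtension c) {w : ℂ | |w.im| < κ'} := by
  refine differentiableOn_tsum_of_summable_norm
    ((summable_exp_mul_abs_int (sub_neg.mpr hκ')).mul_left C)
    (fun n => by fun_prop) (isOpen_setOf_abs_im_lt κ') fun n w hw => ?_
  calc ‖c n * exp (I * n * w)‖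
      ≤ C * Real.exp (-κ * |(n : ℝ)|) * Real.exp (κ' * |(n : ℝ)|) := by
        rw [norm_mul]
        exact mul_le_mul (hc n) (norm_exp_I_mul_intCast_mul_le n hw.le)
          (norm_nonneg _) ((norm_nonneg _).trans (hc n))
    _ = C * Real.exp ((κ' - κ) * |(n : ℝ)|) := by
        rw [mul_assoc, ← Real.exp_add]; ring_nf

lemma differentiableAt_fourierSeriesExtension
    (hc : ∀ n : ℤ, ‖c n‖ ≤ C * Real.exp (-κ * |(n : ℝ)|)) {z : ℂ} (hz : |z.im| < κ) :
    DifferentiableAt ℂ (fourierSeriesExtension c) z := by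
  have hmid : |z.im| < (|z.im| + κ) / 2 := by linarith
  exact (differentiableOn_fourierSeriesExtension (by linarith) hc).differentiableAt
    ((isOpen_setOf_abs_im_lt _).mem_nhds hmid)

end DecayingCoefficients

lemma fourierSeriesExtension_ofReal (g : C(AddCircle (2 * π), ℂ))
    (hsum : Summable (fourierCoeff g)) (x : ℝ) :
    fourierSeriesExtension (fourierCoeff g) x = g x := by
  refine HasSum.tsum_eq ?_
  convert has_pointwise_sum_fourier_series_of_summable hsum (x : AddCircle (2 * π)) using 2 with n
  rw [smul_eq_mul, fourier_coe_two_pi]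

theorem stmt5_general (f : ℝ → ℂ) (hf : Continuous f)
    (hfp : Function.Periodic f (2 * Real.pi))
    (C κ : ℝ) (hκ : 0 < κ)
    (hdecay : ∀ ξ : ℤ,
      ‖(1 / (2 * (Real.pi : ℂ))) *
          ∫ x in (0 : ℝ)..(2 * Real.pi), f x * Complex.exp (-Complex.I * ξ * x)‖ ≤
        C * Real.exp (-κ * |(ξ : ℝ)|)) :
    ∃ F : ℂ → ℂ,
      (∀ z : ℂ, |z.im| < κ → DifferentiableAt ℂ F z) ∧
      ∀ x : ℝ, F x = f x := by
  let g : C(AddCircle (2 * π), ℂ) := ⟨hfp.lift, continuous_coinduced_dom.mpr hf⟩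
  have hcoeff : ∀ n : ℤ, ‖fourierCoeff g n‖ ≤ C * Real.exp (-κ * |(n : ℝ)|) := fun n => by
    simpa only [g, ContinuousMap.coe_mk, fourierCoeff_periodic_lift_two_pi hfp] using hdecay n
  refine ⟨fourierSeriesExtension (fourierCoeff g),
    fun z hz => differentiableAt_fourierSeriesExtension hcoeff hz, fun x => ?_⟩
  rw [fourierSeriesExtension_ofReal g (summable_of_norm_le_exp_neg_mul_abs hκ hcoeff)]
  exact hfp.lift_coe x

/-- Conversely, a continuous `2π`-periodic function whose Fourier coefficients decay like
`C e^{-κ|ξ|}` extends holomorphically to the open strip `{z : |Im z| < κ}`. -/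
theorem stmt5 (f : ℝ → ℂ) (hf : Continuous f)
    (hfp : Function.Periodic f (2 * Real.pi))
    (C κ : ℝ) (hC : 0 < C) (hκ : 0 < κ)
    (hdecay : ∀ ξ : ℤ,
      ‖(1 / (2 * (Real.pi : ℂ))) *
          ∫ x in (0 : ℝ)..(2 * Real.pi), f x * Complex.exp (-Complex.I * ξ * x)‖ ≤
        C * Real.exp (-κ * |(ξ : ℝ)|)) :
    ∃ F : ℂ → ℂ,
      (∀ z : ℂ, |z.im| < κ → DifferentiableAt ℂ F z) ∧
      ∀ x : ℝ, F x = f x :=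
  stmt5_general f hf hfp C κ hκ hdecay
end

section
/- The nearest complex zero to the real axis of the function θ ↦ (5 - 2cos θ)² - 4 occurs at θ with cos θ = 3/2, i.e., at θ = ±i·log((3+√5)/2); in particular, the function (5-2cos z)²-4 is nonvanishing and the square root √((5-2cos z)²-4) is analytic on the open strip {z : |Im z| < log((3+√5)/2)}. -/
lemma coshlog : Real.cosh (Real.log ((3 + Real.sqrt 5) / 2)) = 3 / 2 := by
  have h5 : Real.sqrt 5 ^ 2 = 5 := Real.sq_sqrt (by norm_num)
  have hs : (1:ℝ) < Real.sqrt 5 := by nlinarith [Real.sqrt_nonneg 5]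
  have ha : (0:ℝ) < (3 + Real.sqrt 5) / 2 := by linarith
  rw [Real.cosh_eq, Real.exp_neg, Real.exp_log ha]
  field_simp
  nlinarith

lemma re_cos_lt {z : ℂ} (h : |z.im| < Real.log ((3 + Real.sqrt 5) / 2)) :
    (Complex.cos z).re < 3 / 2 := by
  have h1 : Real.cosh z.im < 3 / 2 := by
    rw [← coshlog]
    rw [Real.cosh_lt_cosh]
    rwa [abs_of_nonneg (le_trans (abs_nonneg _) h.le)]
  have h2 : Real.cos z.re ≤ 1 := Real.cos_le_one _
  have h3 : (0:ℝ) < Real.cosh z.im := Real.cosh_pos _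
  have hre : (Complex.cos z).re = Real.cos z.re * Real.cosh z.im := by
    rw [Complex.cos_eq, ← Complex.ofReal_cos, ← Complex.ofReal_cosh, ← Complex.ofReal_sin,
      ← Complex.ofReal_sinh]
    simp [Complex.cos_ofReal_re]
  calc (Complex.cos z).re = Real.cos z.re * Real.cosh z.im := hre
    _ ≤ 1 * Real.cosh z.im := by nlinarith
    _ < 3 / 2 := by linarith

/-- The zero of `(5 - 2 cos z)² - 4` nearest the real axis lies at `z = ± i log((3+√5)/2)`,
where `cos z = 3/2`; in particular `(5 - 2 cos z)² - 4` is nonvanishing on the open strip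
`{z : |Im z| < log((3+√5)/2)}` and admits an analytic square root there. -/
theorem stmt8 :
    (Complex.cos (Complex.I * (Real.log ((3 + Real.sqrt 5) / 2) : ℝ)) = 3 / 2) ∧
    (∀ z : ℂ, |z.im| < Real.log ((3 + Real.sqrt 5) / 2) →
      (5 - 2 * Complex.cos z) ^ 2 - 4 ≠ 0) ∧
    (∃ g : ℂ → ℂ,
      (∀ z : ℂ, |z.im| < Real.log ((3 + Real.sqrt 5) / 2) → DifferentiableAt ℂ g z) ∧
      (∀ z : ℂ, |z.im| < Real.log ((3 + Real.sqrt 5) / 2) →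
        g z ^ 2 = (5 - 2 * Complex.cos z) ^ 2 - 4)) := by
  have key : ∀ z : ℂ, |z.im| < Real.log ((3 + Real.sqrt 5) / 2) →
      (3 - 2 * Complex.cos z) ≠ 0 ∧ (7 - 2 * Complex.cos z) ≠ 0 ∧
      0 < (3 - 2 * Complex.cos z).re ∧ 0 < (7 - 2 * Complex.cos z).re := by
    intro z hz
    have h := re_cos_lt hz
    have h3 : (0:ℝ) < (3 - 2 * Complex.cos z).re := by simp [Complex.sub_re]; linarith
    have h7 : (0:ℝ) < (7 - 2 * Complex.cos z).re := by simp [Complex.sub_re]; linarith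
    exact ⟨fun e => by simp [e] at h3, fun e => by simp [e] at h7, h3, h7⟩
  refine ⟨?_, ?_, ?_⟩
  · rw [mul_comm, Complex.cos_mul_I, ← Complex.ofReal_cosh, coshlog]
    norm_num
  · intro z hz
    obtain ⟨h3, h7, -, -⟩ := key z hz
    have : (5 - 2 * Complex.cos z) ^ 2 - 4 = (3 - 2 * Complex.cos z) * (7 - 2 * Complex.cos z) := by
      ring
    rw [this]
    exact mul_ne_zero h3 h7
  · refine ⟨fun z => (3 - 2 * Complex.cos z) ^ ((1:ℂ)/2) * (7 - 2 * Complex.cos z) ^ ((1:ℂ)/2),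
      ?_, ?_⟩
    · intro z hz
      obtain ⟨-, -, h3, h7⟩ := key z hz
      have d : DifferentiableAt ℂ (fun z => 3 - 2 * Complex.cos z) z := by fun_prop
      have d7 : DifferentiableAt ℂ (fun z => 7 - 2 * Complex.cos z) z := by fun_prop
      exact ((d.cpow (differentiableAt_const _) (Complex.mem_slitPlane_iff.2 (Or.inl h3))).mul
        (d7.cpow (differentiableAt_const _) (Complex.mem_slitPlane_iff.2 (Or.inl h7))))
    · intro z hz
      obtain ⟨h3, h7, -, -⟩ := key z hz
      have sq : ∀ w : ℂ, w ≠ 0 → (w ^ ((1:ℂ)/2)) ^ 2 = w := by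
        intro w hw
        rw [sq, ← Complex.cpow_add _ _ hw]
        norm_num
      rw [mul_pow, sq _ h3, sq _ h7]
      ring
end

section
/- For integers j ∈ ℤ and k ≥ 0, the double integral (1/4π²)∫₀^{2π}∫₀^{2π} e^{ijθ}e^{ikφ}/(-5 + 2cosθ + 2cosφ) dθ dφ equals the single integral -(1/2π)∫₀^{2π} e^{ijθ}·[(1/2)(5 - 2cosθ - √((5-2cosθ)²-4))]^k / √((5-2cosθ)²-4) dθ. -/
/-!
For fixed `θ` put `a = 5 - 2 cos θ > 2` and let `α = (a - √(a² - 4)) / 2 ∈ (0, 1)` be the small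
root of `w² - a w + 1`. On the unit circle `w = e^{iφ}` one has
`(w - α)(w - α⁻¹) = w (2 cos φ - a)`, so the inner `φ`-integral is the contour integral of
`w^k / ((w - α)(w - α⁻¹)) dw / i`, and Cauchy's integral formula at the only pole `α` inside the
disc gives `2π α^k / (α - α⁻¹) = -2π α^k / √(a² - 4)`.
-/

open Complex Metric
open scoped Real

lemma two_cos_mul_exp_mul_I (φ : ℝ) :
    2 * Complex.cos φ * exp (φ * I) = exp (φ * I) ^ 2 + 1 := by
  rw [Complex.cos, neg_mul, exp_neg]
  field_simp

lemma circleIntegral_pow_div_sub_mul_sub {α β : ℂ} (hα : ‖α‖ < 1) (hβ : 1 < ‖β‖) (k : ℕ) :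
    (∮ z in C(0, 1), z ^ k / ((z - α) * (z - β))) = 2 * π * I * (α ^ k / (α - β)) := by
  have hf : DiffContOnCl ℂ (fun z => z ^ k / (z - β)) (ball 0 1) := by
    refine DifferentiableOn.diffContOnCl fun z hz => ?_
    rw [closure_ball 0 one_ne_zero, mem_closedBall_zero_iff] at hz
    have hzβ : z - β ≠ 0 := sub_ne_zero.2 fun h => by rw [h] at hz; linarith
    exact ((differentiableAt_pow k).div (differentiableAt_id.sub_const β) hzβ).differentiableWithinAt
  have hcauchy := hf.circleIntegral_sub_inv_smul (mem_ball_zero_iff.2 hα)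
  simp only [smul_eq_mul] at hcauchy
  rw [← hcauchy]
  congr 1
  ext z
  rw [mul_div_assoc', inv_mul_eq_div, div_div]

lemma integral_exp_mul_div_two_cos_sub {α : ℂ} (hα₀ : α ≠ 0) (hα : ‖α‖ < 1) (k : ℕ) :
    ∫ φ in (0 : ℝ)..2 * π, exp (I * k * φ) / (2 * Complex.cos φ - (α + α⁻¹))
      = 2 * π * (α ^ k / (α - α⁻¹)) := by
  have hβ : 1 < ‖α⁻¹‖ := by
    rw [norm_inv]; exact one_lt_inv_iff₀.2 ⟨norm_pos_iff.2 hα₀, hα⟩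
  have hcirc := circleIntegral_pow_div_sub_mul_sub hα hβ k
  rw [circleIntegral] at hcirc
  apply mul_left_cancel₀ I_ne_zero
  rw [← intervalIntegral.integral_const_mul]
  calc _ = ∫ φ in (0 : ℝ)..2 * π, deriv (circleMap 0 1) φ •
        (circleMap 0 1 φ ^ k / ((circleMap 0 1 φ - α) * (circleMap 0 1 φ - α⁻¹))) := by
        refine intervalIntegral.integral_congr fun φ _ => ?_
        simp only [deriv_circleMap, circleMap, ofReal_one, one_mul, zero_add, smul_eq_mul]
        set w := exp (φ * I)
        have hk : exp (I * k * φ) = w ^ k := by rw [← Complex.exp_nat_mul]; ring_nf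
        have hfactor : (w - α) * (w - α⁻¹) = w * (2 * Complex.cos φ - (α + α⁻¹)) := by
          linear_combination mul_inv_cancel₀ hα₀ - two_cos_mul_exp_mul_I φ
        rw [hk, hfactor, mul_comm w I, mul_assoc, mul_div_assoc' w,
          mul_div_mul_left _ _ (exp_ne_zero _)]
    _ = _ := by rw [hcirc]; ring

lemma integral_exp_mul_div_neg_add_two_cos {a : ℝ} (ha : 2 < a) (k : ℕ) :
    ∫ φ in (0 : ℝ)..2 * π, exp (I * k * φ) / ((-a + 2 * Real.cos φ : ℝ) : ℂ)
      = -(2 * π) * ((1 / 2 * (a - √(a ^ 2 - 4)) : ℝ) : ℂ) ^ k / (√(a ^ 2 - 4) : ℝ) := by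
  set s := √(a ^ 2 - 4)
  have hs_sq : s ^ 2 = a ^ 2 - 4 := Real.sq_sqrt (by nlinarith)
  have hs_pos : 0 < s := Real.sqrt_pos.2 (by nlinarith)
  have hs_lt : s < a := by nlinarith
  set α : ℝ := 1 / 2 * (a - s) with hα_def
  have hα_pos : 0 < α := by rw [hα_def]; linarith
  have hα_inv : α⁻¹ = 1 / 2 * (a + s) := by
    refine inv_eq_of_mul_eq_one_right ?_
    linear_combination (-1 / 4 : ℝ) * hs_sq
  have hα_lt : α < 1 := (one_lt_inv_iff₀.1 (by rw [hα_inv]; linarith)).2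
  have hα : ‖(α : ℂ)‖ < 1 := by rwa [norm_real, Real.norm_of_nonneg hα_pos.le]
  have hdenom (φ : ℝ) : ((-a + 2 * Real.cos φ : ℝ) : ℂ) = 2 * Complex.cos φ - (α + (α : ℂ)⁻¹) := by
    rw [← ofReal_inv, hα_inv, hα_def]; push_cast; ring
  have hdiff : (α : ℂ) - (α : ℂ)⁻¹ = -s := by
    rw [← ofReal_inv, hα_inv, hα_def]; push_cast; ring
  simp only [hdenom]
  rw [integral_exp_mul_div_two_cos_sub (ofReal_ne_zero.2 hα_pos.ne') hα, hdiff, div_neg]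
  ring

/-- Reduction of the double contour integral for the inverse Kasteleyn matrix entries to a
single integral via the residue theorem: for `j ∈ ℤ` and `k ≥ 0`,
`(1/4π²)∫∫ e^{ijθ}e^{ikφ}/(-5+2cosθ+2cosφ) dθdφ
  = -(1/2π)∫ e^{ijθ} α(θ)^k / √((5-2cosθ)²-4) dθ`
with `α(θ) = (5 - 2cosθ - √((5-2cosθ)²-4))/2`. -/
theorem stmt10 (j : ℤ) (k : ℕ) :
    (1 / (4 * (Real.pi : ℂ) ^ 2)) *
      ∫ θ in (0 : ℝ)..(2 * Real.pi), ∫ φ in (0 : ℝ)..(2 * Real.pi),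
        Complex.exp (Complex.I * j * θ) * Complex.exp (Complex.I * k * φ) /
          ((-5 + 2 * Real.cos θ + 2 * Real.cos φ : ℝ) : ℂ) =
    -(1 / (2 * (Real.pi : ℂ))) *
      ∫ θ in (0 : ℝ)..(2 * Real.pi),
        Complex.exp (Complex.I * j * θ) *
          (((1 / 2 * (5 - 2 * Real.cos θ - Real.sqrt ((5 - 2 * Real.cos θ) ^ 2 - 4)) : ℝ) : ℂ)) ^ k /
          ((Real.sqrt ((5 - 2 * Real.cos θ) ^ 2 - 4) : ℝ) : ℂ) := by
  have hinner (θ : ℝ) : ∫ φ in (0 : ℝ)..2 * π,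
      exp (I * j * θ) * exp (I * k * φ) / ((-5 + 2 * Real.cos θ + 2 * Real.cos φ : ℝ) : ℂ)
      = -(2 * π) * (exp (I * j * θ) *
          ((1 / 2 * (5 - 2 * Real.cos θ - √((5 - 2 * Real.cos θ) ^ 2 - 4)) : ℝ) : ℂ) ^ k /
          (√((5 - 2 * Real.cos θ) ^ 2 - 4) : ℝ)) := by
    have ha : 2 < 5 - 2 * Real.cos θ := by linarith [Real.cos_le_one θ]
    simp_rw [mul_div_assoc, show ∀ φ, -5 + 2 * Real.cos θ + 2 * Real.cos φ
      = -(5 - 2 * Real.cos θ) + 2 * Real.cos φ from fun φ => by ring]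
    rw [intervalIntegral.integral_const_mul, integral_exp_mul_div_neg_add_two_cos ha]
    ring
  simp_rw [hinner, intervalIntegral.integral_const_mul]
  field_simp
  ring
end
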